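/- Suppose R = C(M) + E where C(M) = M·λ_k(β)_a⃗ with M ∈ F^(s×k) and E ∈ F^(s×n) has sum-rank weight wt_ΣR(E) = t. Let D ∈ ℕ with k ≤ D ≤ n − t. Then the F-linear space of all tuples (Q_0, Q_1, …, Q_s) with Q_0 ∈ F^D and Q_l ∈ F^(D−k+1) for 1 ≤ l ≤ s that satisfy the interpolation conditions for R has dimension over F at least s·(D+1) − s·k − t. -/

import Mathlib

namespace Stmt11

/-- `genNorm σ a i = σ^(i-1)(a) ⋯ σ(a) · a`, the generalized power function `N_i(a)`. -/
def genNorm {F : Type} [Field F] (σ : F ≃+* F) (a : F) : ℕ → F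
  | 0 => 1
  | i + 1 => (⇑σ)^[i] a * genNorm σ a i

/-- Generalized operator `D_a^i(b) = σ^i(b) · N_i(a)` for `i ∈ ℕ`. -/
def opev {F : Type} [Field F] (σ : F ≃+* F) (a b : F) (i : ℕ) : F :=
  (⇑σ)^[i] b * genNorm σ a i

/-- `b` is σ-conjugate to `a`, i.e. `b = σ(c)·a·c⁻¹` for some nonzero `c`. -/
def SConj {F : Type} [Field F] (σ : F ≃+* F) (a b : F) : Prop :=
  ∃ c : F, c ≠ 0 ∧ b = σ c * a * c⁻¹

/-- σ-generalized Moore matrix `λ_d(x)_a⃗` w.r.t. the length partition `nn`: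
its row `r` applies `D_{a_i}^r` entrywise to the `i`-th block of `x`. -/
def moore {F : Type} [Field F] (σ : F ≃+* F) {ℓ : ℕ} (nn : Fin ℓ → ℕ) (aa : Fin ℓ → F)
    (d : ℕ) (x : (Σ i : Fin ℓ, Fin (nn i)) → F) :
    Matrix (Fin d) (Σ i : Fin ℓ, Fin (nn i)) F :=
  Matrix.of fun r p => opev σ (aa p.1) (x p) (r : ℕ)

/-- `λ_d(X)_a⃗` for a matrix `X`: the stack of `λ_d(x_j)_a⃗` over the rows of `X`. -/
def mooreMat {F : Type} [Field F] (σ : F ≃+* F) {ℓ : ℕ} (nn : Fin ℓ → ℕ) (aa : Fin ℓ → F)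
    {s : ℕ} (d : ℕ) (X : Matrix (Fin s) (Σ i : Fin ℓ, Fin (nn i)) F) :
    Matrix (Fin s × Fin d) (Σ i : Fin ℓ, Fin (nn i)) F :=
  Matrix.of fun r p => opev σ (aa p.1) (X r.1 p) (r.2 : ℕ)

/-- `rk_q` of a vector: the `K`-dimension of the `K`-span of its entries. -/
noncomputable def rkq (K : Type) [Field K] {F : Type} [Field F] [Algebra K F] {ι : Type}
    (v : ι → F) : ℕ :=
  Module.finrank K (Submodule.span K (Set.range v))

/-- `rk_q` of a matrix: the `K`-dimension of the `K`-span of its columns. -/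
noncomputable def rkqMat (K : Type) [Field K] {F : Type} [Field F] [Algebra K F]
    {s : ℕ} {ι : Type} (X : Matrix (Fin s) ι F) : ℕ :=
  Module.finrank K (Submodule.span K (Set.range fun j : ι => fun r : Fin s => X r j))

/-- Sum-rank weight of a blockwise vector. -/
noncomputable def wtV (K : Type) [Field K] {F : Type} [Field F] [Algebra K F] {ℓ : ℕ}
    (nn : Fin ℓ → ℕ) (x : (Σ i : Fin ℓ, Fin (nn i)) → F) : ℕ :=
  ∑ i, rkq K fun μ : Fin (nn i) => x ⟨i, μ⟩

/-- Sum-rank weight of a blockwise matrix. -/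
noncomputable def wtM (K : Type) [Field K] {F : Type} [Field F] [Algebra K F] {s ℓ : ℕ}
    (nn : Fin ℓ → ℕ) (X : Matrix (Fin s) (Σ i : Fin ℓ, Fin (nn i)) F) : ℕ :=
  ∑ i, rkqMat K (Matrix.of fun (r : Fin s) (μ : Fin (nn i)) => X r ⟨i, μ⟩)

/-- Codeword `C(M) = M · λ_k(β)_a⃗` of the `s`-interleaved linearized Reed–Solomon code. -/
def codeword {F : Type} [Field F] (σ : F ≃+* F) {ℓ : ℕ} (nn : Fin ℓ → ℕ) (aa : Fin ℓ → F)
    (β : (Σ i : Fin ℓ, Fin (nn i)) → F) {s : ℕ} (k : ℕ) (M : Matrix (Fin s) (Fin k) F) :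
    Matrix (Fin s) (Σ i : Fin ℓ, Fin (nn i)) F :=
  M * moore σ nn aa k β

/-- Interpolation matrix: row index `inl u` corresponds to the coefficient `Q_{0,u}`
(evaluated on `β`), row index `inr (l, u)` to the coefficient `Q_{l,u}` (evaluated on
row `l` of `R`). A tuple `(Q_0, Q_1, …, Q_s)` satisfies the interpolation conditions
iff its coefficient vector is in the kernel of `(intMat …)ᵀ`. -/
def intMat {F : Type} [Field F] (σ : F ≃+* F) {ℓ : ℕ} (nn : Fin ℓ → ℕ) (aa : Fin ℓ → F)
    (β : (Σ i : Fin ℓ, Fin (nn i)) → F) {s : ℕ}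
    (R : Matrix (Fin s) (Σ i : Fin ℓ, Fin (nn i)) F) (D k : ℕ) :
    Matrix (Fin D ⊕ Fin s × Fin (D - k + 1)) (Σ i : Fin ℓ, Fin (nn i)) F :=
  Matrix.of fun c p =>
    match c with
    | Sum.inl u => opev σ (aa p.1) (β p) (u : ℕ)
    | Sum.inr lu => opev σ (aa p.1) (R lu.1 p) (lu.2 : ℕ)

/-! The solution space is the left kernel of the interpolation matrix, so its dimension is the
number `D + s(D - k + 1)` of rows minus the rank. The matrix is the sum of the interpolation
matrices of `(β, C(M))` and of `(0, E)`. Since `D_a^u ∘ D_a^j = D_a^{u+j}`, every row of the first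
is a combination of the `D` rows of `λ_D(β)`, so its rank is at most `D`. Since `D_a^u` is linear
over the fixed field `GF(q)` of `σ`, every column of the second is a `GF(q)`-linear image of the
corresponding column of `E`; hence the columns coming from block `i` span an `F`-space of
dimension at most `rk_q` of block `i` of `E`, and the rank of the second is at most `t`. -/

section Dimension

variable {K F V W : Type*} [Field K] [Field F] [Algebra K F]

theorem Submodule.finrank_span_le_finrank_span_of_tower
    [AddCommGroup W] [Module K W] [Module F W] [IsScalarTower K F W]
    (S : Set W) [FiniteDimensional K (Submodule.span K S)] :
    Module.finrank F (Submodule.span F S) ≤ Module.finrank K (Submodule.span K S) := by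
  set b := Module.finBasis K (Submodule.span K S)
  have hb : Submodule.span K (Set.range (Subtype.val ∘ b)) = Submodule.span K S := by
    rw [Set.range_comp, ← Submodule.coe_subtype, Submodule.span_image, b.span_eq,
      Submodule.map_top, Submodule.range_subtype]
  have := FiniteDimensional.span_of_finite F (Set.finite_range (Subtype.val ∘ b))
  calc Module.finrank F (Submodule.span F S)
      ≤ Module.finrank F (Submodule.span F (Set.range (Subtype.val ∘ b))) :=
        Submodule.finrank_mono <| Submodule.span_le.2 fun x hx =>
          Submodule.span_le_restrictScalars K F _ (by rw [hb]; exact Submodule.subset_span hx)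
    _ ≤ Module.finrank K (Submodule.span K S) :=
        (finrank_range_le_card _).trans (by simp)

theorem Submodule.finrank_iSup_le_sum {ι : Type*} [Fintype ι] [AddCommGroup V] [Module K V]
    (p : ι → Submodule K V) [∀ i, FiniteDimensional K (p i)] :
    Module.finrank K ↥(⨆ i, p i) ≤ ∑ i, Module.finrank K (p i) := by
  classical
  let f : ((i : ι) → p i) →ₗ[K] V := LinearMap.lsum K (fun i => p i) K fun i => (p i).subtype
  have hle : ⨆ i, p i ≤ LinearMap.range f :=
    iSup_le fun i x hx => ⟨Pi.single i ⟨x, hx⟩, by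
      simp only [f, LinearMap.lsum_apply, LinearMap.coe_sum, LinearMap.coe_comp,
        Submodule.coe_subtype, LinearMap.coe_proj, Finset.sum_apply, Function.comp_apply,
        Function.eval]
      rw [Finset.sum_eq_single i (fun j _ hj => by simp [Pi.single_eq_of_ne hj]) (by simp)]
      simp⟩
  calc Module.finrank K ↥(⨆ i, p i) ≤ Module.finrank K (LinearMap.range f) :=
        Submodule.finrank_mono hle
    _ ≤ Module.finrank K ((i : ι) → p i) := LinearMap.finrank_range_le f
    _ = ∑ i, Module.finrank K (p i) := Module.finrank_pi_fintype K

theorem finrank_span_iUnion_image_le {ι : Type*} [Fintype ι] [AddCommGroup V] [Module K V]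
    [AddCommGroup W] [Module K W] [Module F W] [IsScalarTower K F W]
    (Φ : ι → V →ₗ[K] W) (X : ι → Set V) (hX : ∀ i, (X i).Finite) :
    Module.finrank F (Submodule.span F (⋃ i, Φ i '' X i)) ≤
      ∑ i, Module.finrank K (Submodule.span K (X i)) := by
  have := fun i => FiniteDimensional.span_of_finite K (hX i)
  have := FiniteDimensional.span_of_finite K (Set.finite_iUnion fun i => (hX i).image (Φ i))
  calc Module.finrank F (Submodule.span F (⋃ i, Φ i '' X i))
      ≤ Module.finrank K (Submodule.span K (⋃ i, Φ i '' X i)) :=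
        Submodule.finrank_span_le_finrank_span_of_tower _
    _ = Module.finrank K ↥(⨆ i, (Submodule.span K (X i)).map (Φ i)) := by
        rw [Submodule.span_iUnion, iSup_congr fun i => Submodule.span_image (Φ i)]
    _ ≤ ∑ i, Module.finrank K ((Submodule.span K (X i)).map (Φ i)) :=
        Submodule.finrank_iSup_le_sum _
    _ ≤ ∑ i, Module.finrank K (Submodule.span K (X i)) :=
        Finset.sum_le_sum fun i _ => Submodule.finrank_map_le _ _

end Dimension

namespace Matrix

variable {m n F : Type*} [Fintype n] [Field F]

theorem rank_add_le (A B : Matrix m n F) : (A + B).rank ≤ A.rank + B.rank :=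
  calc (A + B).rank
      ≤ Module.finrank F ↥(LinearMap.range A.mulVecLin ⊔ LinearMap.range B.mulVecLin) :=
        Submodule.finrank_mono <| by
          rw [Matrix.mulVecLin_add]
          exact LinearMap.range_add_le _ _
    _ ≤ A.rank + B.rank := Submodule.finrank_add_le_finrank_add_finrank _ _

theorem finrank_ker_mulVecLin_transpose_add_rank [Fintype m] (A : Matrix m n F) :
    Module.finrank F (LinearMap.ker A.transpose.mulVecLin) + A.rank = Fintype.card m := by
  rw [← Matrix.rank_transpose, add_comm, Matrix.rank, LinearMap.finrank_range_add_finrank_ker,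
    Module.finrank_fintype_fun_eq_card]

end Matrix

section Opev

variable {F : Type} [Field F] (σ : F ≃+* F)

theorem opev_eq_pow_apply_mul (a b : F) (u : ℕ) :
    opev σ a b u = (σ ^ u) b * genNorm σ a u := by
  rw [opev, RingAut.coe_pow]

theorem genNorm_add (a : F) (u j : ℕ) :
    genNorm σ a (u + j) = (σ ^ u) (genNorm σ a j) * genNorm σ a u := by
  induction j with
  | zero => simp [genNorm]
  | succ j ih =>
    rw [← add_assoc, genNorm, genNorm, ih, map_mul, ← RingAut.coe_pow, ← RingAut.coe_pow,
      pow_add, RingAut.mul_apply]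
    ring

theorem opev_opev (a b : F) (u j : ℕ) : opev σ a (opev σ a b j) u = opev σ a b (u + j) := by
  simp only [opev_eq_pow_apply_mul, map_mul, genNorm_add, pow_add, RingAut.mul_apply]
  ring

theorem opev_add (a x y : F) (u : ℕ) : opev σ a (x + y) u = opev σ a x u + opev σ a y u := by
  simp only [opev_eq_pow_apply_mul, map_add, add_mul]

theorem opev_sum_mul_opev {ι : Type*} (S : Finset ι) (c : ι → F) (e : ι → ℕ) (a b : F)
    (u : ℕ) :
    opev σ a (∑ j ∈ S, c j * opev σ a b (e j)) u =
      ∑ j ∈ S, (σ ^ u) (c j) * opev σ a b (u + e j) := by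
  rw [opev_eq_pow_apply_mul, map_sum, Finset.sum_mul]
  refine Finset.sum_congr rfl fun j _ => ?_
  rw [← opev_opev, opev_eq_pow_apply_mul σ a (opev σ a b (e j)), map_mul]
  ring

def opevLinearMap (K : Type) [Field K] [Algebra K F]
    (hσ : ∀ c : K, σ (algebraMap K F c) = algebraMap K F c) (a : F) (u : ℕ) : F →ₗ[K] F where
  toFun b := opev σ a b u
  map_add' x y := opev_add σ a x y u
  map_smul' c b := by
    simp only [opev_eq_pow_apply_mul, Algebra.smul_def, map_mul, RingAut.coe_pow,
      Function.iterate_fixed (hσ c), RingHom.id_apply]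
    ring

end Opev

section IntMat

variable {F : Type} [Field F] (σ : F ≃+* F) {ℓ : ℕ} (nn : Fin ℓ → ℕ) (aa : Fin ℓ → F) {s : ℕ}

theorem intMat_add (D k : ℕ) (β β' : (Σ i : Fin ℓ, Fin (nn i)) → F)
    (R R' : Matrix (Fin s) (Σ i : Fin ℓ, Fin (nn i)) F) :
    intMat σ nn aa (β + β') (R + R') D k =
      intMat σ nn aa β R D k + intMat σ nn aa β' R' D k := by
  ext (u | lu) p <;> simp [intMat, opev_add]

theorem rank_intMat_codeword_le (β : (Σ i : Fin ℓ, Fin (nn i)) → F)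
    {k D : ℕ} (M : Matrix (Fin s) (Fin k) F) (hkD : k ≤ D) :
    (intMat σ nn aa β (codeword σ nn aa β k M) D k).rank ≤ D := by
  rw [Matrix.rank_eq_finrank_span_row]
  calc _ ≤ Module.finrank F (Submodule.span F (Set.range (moore σ nn aa D β).row)) :=
        Submodule.finrank_mono <| Submodule.span_le.2 ?_
    _ ≤ D := (finrank_range_le_card _).trans (by simp)
  rintro _ ⟨u | ⟨l, u⟩, rfl⟩
  · exact Submodule.subset_span ⟨u, rfl⟩
  · have hrow : (intMat σ nn aa β (codeword σ nn aa β k M) D k).row (Sum.inr (l, u)) =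
        ∑ j : Fin k, (σ ^ (u : ℕ)) (M l j) • (moore σ nn aa D β).row ⟨u + j, by omega⟩ := by
      ext p
      simp [intMat, codeword, moore, Matrix.mul_apply, opev_sum_mul_opev]
    rw [hrow]
    exact Submodule.sum_mem _ fun j _ =>
      Submodule.smul_mem _ _ (Submodule.subset_span ⟨_, rfl⟩)

variable (K : Type) [Field K] [Algebra K F]

def intMatZeroColumn (hσ : ∀ c : K, σ (algebraMap K F c) = algebraMap K F c)
    (a : F) (D k : ℕ) :
    (Fin s → F) →ₗ[K] (Fin D ⊕ Fin s × Fin (D - k + 1) → F) :=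
  LinearMap.pi <| Sum.elim (fun _ => 0) fun lu =>
    (opevLinearMap σ K hσ a lu.2).comp (LinearMap.proj lu.1)

theorem intMat_zero_col_eq (hσ : ∀ c : K, σ (algebraMap K F c) = algebraMap K F c)
    (R : Matrix (Fin s) (Σ i : Fin ℓ, Fin (nn i)) F) (D k : ℕ)
    (p : Σ i : Fin ℓ, Fin (nn i)) :
    (intMat σ nn aa 0 R D k).col p =
      intMatZeroColumn σ K hσ (aa p.1) D k fun l => R l p := by
  ext (u | lu) <;> simp [intMat, intMatZeroColumn, opevLinearMap, opev]

theorem rank_intMat_zero_le_wtM (hσ : ∀ c : K, σ (algebraMap K F c) = algebraMap K F c)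
    (R : Matrix (Fin s) (Σ i : Fin ℓ, Fin (nn i)) F) (D k : ℕ) :
    (intMat σ nn aa 0 R D k).rank ≤ wtM K nn R := by
  have hcols : Set.range (intMat σ nn aa 0 R D k).col =
      ⋃ i, intMatZeroColumn σ K hσ (aa i) D k '' Set.range fun μ : Fin (nn i) =>
        fun l => R l ⟨i, μ⟩ := by
    simp only [Set.range_sigma_eq_iUnion_range, ← Set.range_comp]
    exact Set.iUnion_congr fun i => congrArg Set.range <| funext fun μ =>
      intMat_zero_col_eq σ nn aa K hσ R D k ⟨i, μ⟩
  rw [Matrix.rank_eq_finrank_span_cols, hcols]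
  exact finrank_span_iUnion_image_le _ _ fun i => Set.finite_range _

end IntMat

theorem interpolation_solution_dim_ge_general
    {K F : Type} [Field K] [Field F] [Algebra K F]
    (σ : F ≃+* F)
    (hfix : ∀ x : F, σ x = x ↔ x ∈ Set.range (algebraMap K F))
    {ℓ : ℕ} (nn : Fin ℓ → ℕ) (aa : Fin ℓ → F)
    (β : (Σ i : Fin ℓ, Fin (nn i)) → F)
    {s : ℕ} {k t : ℕ}
    (M : Matrix (Fin s) (Fin k) F)
    (E R : Matrix (Fin s) (Σ i : Fin ℓ, Fin (nn i)) F)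
    (hR : R = codeword σ nn aa β k M + E)
    (ht : wtM K nn E = t)
    (D : ℕ) (hkD : k ≤ D) :
    (s : ℤ) * (D + 1) - s * k - t ≤
      (Module.finrank F
        (LinearMap.ker (Matrix.mulVecLin (intMat σ nn aa β R D k).transpose)) : ℤ) := by
  have hσ : ∀ c : K, σ (algebraMap K F c) = algebraMap K F c := fun c => (hfix _).2 ⟨c, rfl⟩
  have hrank : (intMat σ nn aa β R D k).rank ≤ D + t := by
    have hsplit : intMat σ nn aa β R D k =
        intMat σ nn aa β (codeword σ nn aa β k M) D k + intMat σ nn aa 0 E D k := by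
      simpa [hR] using intMat_add σ nn aa D k β 0 (codeword σ nn aa β k M) E
    rw [hsplit, ← ht]
    exact (Matrix.rank_add_le _ _).trans <| add_le_add
      (rank_intMat_codeword_le σ nn aa β M hkD) (rank_intMat_zero_le_wtM σ nn aa K hσ E D k)
  have hnullity := Matrix.finrank_ker_mulVecLin_transpose_add_rank (intMat σ nn aa β R D k)
  simp only [Fintype.card_sum, Fintype.card_fin, Fintype.card_prod] at hnullity
  have hcount : (s : ℤ) * (D + 1) - s * k = (s * (D - k + 1) : ℕ) := by
    push_cast [Nat.cast_sub hkD]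
    ring
  omega

/-- Dimension of the interpolation solution space.
If `R = C(M) + E` with `wt_ΣR(E) = t` and `k ≤ D ≤ n − t`, then the `F`-linear space
of tuples `(Q_0, Q_1, …, Q_s)` with `Q_0 ∈ F^D`, `Q_l ∈ F^{D−k+1}` satisfying the
interpolation conditions for `R` has `F`-dimension at least `s(D+1) − sk − t`. -/
theorem interpolation_solution_dim_ge
    {K F : Type} [Field K] [Field F] [Algebra K F] [Fintype K] [Fintype F]
    (σ : F ≃+* F)
    (hfix : ∀ x : F, σ x = x ↔ x ∈ Set.range (algebraMap K F))
    {ℓ : ℕ} (hℓ : 1 ≤ ℓ) (nn : Fin ℓ → ℕ) (aa : Fin ℓ → F)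
    (ha0 : ∀ i, aa i ≠ 0)
    (haconj : ∀ i j : Fin ℓ, i ≠ j → ¬ SConj σ (aa i) (aa j))
    (β : (Σ i : Fin ℓ, Fin (nn i)) → F)
    (hβ : ∀ i, LinearIndependent K fun μ : Fin (nn i) => β ⟨i, μ⟩)
    {s : ℕ} (hs : 1 ≤ s) {k n t : ℕ} (hn : n = ∑ i, nn i)
    (hk : 1 ≤ k) (hkn : k ≤ n)
    (M : Matrix (Fin s) (Fin k) F)
    (E R : Matrix (Fin s) (Σ i : Fin ℓ, Fin (nn i)) F)
    (hR : R = codeword σ nn aa β k M + E)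
    (ht : wtM K nn E = t)
    (D : ℕ) (hkD : k ≤ D) (hDn : D ≤ n - t) :
    (s : ℤ) * (D + 1) - s * k - t ≤
      (Module.finrank F
        (LinearMap.ker (Matrix.mulVecLin (intMat σ nn aa β R D k).transpose)) : ℤ) :=
  interpolation_solution_dim_ge_general σ hfix nn aa β M E R hR ht D hkD

end Stmt11
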